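/- (Upper-bound variant of the comparison lemma.) Let M ⊆ ℝ^d, let Z : ℝ^d → ℝ^d be C^(p−1) and Γ : ℝ^d → ℝ be C^p, and let χ₀, …, χ_{p−1} ∈ ℝ with χ_i ≥ 0 for i = 0, …, p−2 satisfy the reversed differential inequality L_Z^p Γ(z) ≥ Σ_{i=0}^{p−1} χ_i · L_Z^i Γ(z) for every z ∈ M. Let 𝓏(·, z₀) be a solution of ż = Z(z) with 𝓏(0, z₀) = z₀ remaining in M for all t ∈ [0, T], and let y : [0, T] → ℝ^p solve ẏ_i = y_{i+1} (i = 1, …, p−1), ẏ_p = Σ_{i=0}^{p−1} χ_i · y_{i+1}, with y(0) = (Γ(z₀), L_Z Γ(z₀), …, L_Z^(p−1) Γ(z₀)). Then Γ(𝓏(t, z₀)) ≥ y₁(t) for all t ∈ [0, T]. -/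

import Mathlib

/-- The Lie derivative of `g` along the vector field `Z`: `L_Z g (z) = Dg(z) (Z z)`. -/
noncomputable def lieDeriv {E : Type*} [NormedAddCommGroup E] [NormedSpace ℝ E]
    (Z : E → E) (g : E → ℝ) : E → ℝ :=
  fun z => fderiv ℝ g z (Z z)

/-- Iterated Lie derivatives: `L_Z^0 g = g`, `L_Z^(k+1) g = L_Z (L_Z^k g)`. -/
noncomputable def lieDerivIter {E : Type*} [NormedAddCommGroup E] [NormedSpace ℝ E]
    (Z : E → E) (g : E → ℝ) : ℕ → E → ℝ
  | 0 => g
  | k + 1 => lieDeriv Z (lieDerivIter Z g k)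

/-! The gaps `e i = L_Z^i Γ (𝓏 t) - y t i` vanish at `t = 0` and satisfy `ė ≥ A e`, where `A` is
the companion matrix of the linear system; its off-diagonal entries are `1`, `0` or `χ i` with
`i ≤ p - 2`, hence nonnegative. Such cooperative differential inequalities keep `e` in the
nonnegative orthant: adding `ε e^{K t}` with `K` above every row sum of `A` makes the perturbed gap
point strictly inwards on each face, so it cannot leave by continuous induction, and `ε → 0`
gives `e ≥ 0`, in particular `Γ (𝓏 t) ≥ y t 0`. -/

open Set Filter Topology Matrix

theorem HasDerivWithinAt.eventually_lt_of_deriv_pos {f : ℝ → ℝ} {f' x : ℝ}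
    (hf : HasDerivWithinAt f f' (Ici x) x) (hf' : 0 < f') : ∀ᶠ y in 𝓝[>] x, f x < f y := by
  have hslope := hasDerivWithinAt_iff_tendsto_slope' (lt_irrefl x) |>.mp hf.Ioi_of_Ici
  filter_upwards [hslope.eventually (lt_mem_nhds hf'), self_mem_nhdsWithin] with y hy hxy
  rw [slope_def_field, div_pos_iff_of_pos_right (sub_pos.mpr hxy)] at hy
  exact sub_pos.mp hy

theorem nonneg_of_deriv_pos_on_boundary {ι : Type*} [Finite ι] {g g' : ℝ → ι → ℝ} {a b : ℝ}
    (hcont : ContinuousOn g (Icc a b))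
    (hderiv : ∀ t ∈ Ico a b, ∀ i, HasDerivWithinAt (fun s => g s i) (g' t i) (Ici t) t)
    (ha : 0 ≤ g a)
    (hboundary : ∀ t ∈ Ico a b, 0 ≤ g t → ∀ i, g t i = 0 → 0 < g' t i) :
    ∀ t ∈ Icc a b, 0 ≤ g t := by
  have hclosed : IsClosed ({t | 0 ≤ g t} ∩ Icc a b) := by
    rw [inter_comm]
    exact hcont.preimage_isClosed_of_isClosed isClosed_Icc isClosed_Ici
  refine fun t ht => hclosed.Icc_subset_of_forall_mem_nhdsWithin ha (fun x ⟨hx, hxI⟩ => ?_) ht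
  have hcoord : ∀ i, ∀ᶠ y in 𝓝[>] x, 0 ≤ g y i := by
    intro i
    rcases (hx i).eq_or_lt with hzero | hpos
    · filter_upwards [(hderiv x hxI i).eventually_lt_of_deriv_pos
        (hboundary x hxI hx i hzero.symm)] with y hy
      exact (hzero.trans_lt hy).le
    · have hcont_i : ContinuousWithinAt (fun s => g s i) (Ioi x) x :=
        (hderiv x hxI i).continuousWithinAt.mono Ioi_subset_Ici_self
      exact (hcont_i.eventually (lt_mem_nhds hpos)).mono fun y hy => hy.le
  exact eventually_all.mpr hcoord

theorem nonneg_of_mulVec_le_deriv {ι : Type*} [Fintype ι] {A : Matrix ι ι ℝ}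
    (hA : ∀ i j, i ≠ j → 0 ≤ A i j) {e e' : ℝ → ι → ℝ} {a b : ℝ}
    (hcont : ContinuousOn e (Icc a b))
    (hderiv : ∀ t ∈ Ico a b, ∀ i, HasDerivWithinAt (fun s => e s i) (e' t i) (Ici t) t)
    (ha : 0 ≤ e a) (hineq : ∀ t ∈ Ico a b, A *ᵥ e t ≤ e' t) :
    ∀ t ∈ Icc a b, 0 ≤ e t := by
  set K : ℝ := 1 + ∑ i, ∑ j, |A i j|
  have hrow : ∀ i, ∑ j, A i j < K := fun i => calc
    ∑ j, A i j ≤ ∑ j, |A i j| := Finset.sum_le_sum fun j _ => le_abs_self _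
    _ ≤ ∑ i, ∑ j, |A i j| :=
      Finset.single_le_sum (f := fun i => ∑ j, |A i j|)
        (fun i _ => Finset.sum_nonneg fun j _ => abs_nonneg _) (Finset.mem_univ i)
    _ < K := lt_one_add _
  have hperturbed : ∀ ε > 0, ∀ t ∈ Icc a b, 0 ≤ e t + fun _ => ε * Real.exp (K * t) := by
    intro ε hε
    have hexp : ∀ s, HasDerivAt (fun s => ε * Real.exp (K * s)) (ε * (Real.exp (K * s) * K)) s :=
      fun s => by simpa using (((hasDerivAt_id s).const_mul K).exp).const_mul ε
    refine nonneg_of_deriv_pos_on_boundary (g' := fun s i => e' s i + ε * (Real.exp (K * s) * K))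
      (hcont.add (continuous_pi fun _ => by fun_prop).continuousOn)
      (fun s hs i => (hderiv s hs i).add (hexp s).hasDerivWithinAt)
      (add_nonneg ha fun _ => by positivity) ?_
    intro s hs hg i hgi
    set E := ε * Real.exp (K * s)
    have hE : 0 < E := by positivity
    have hAg : 0 ≤ (A *ᵥ (e s + fun _ => E)) i := by
      refine Finset.sum_nonneg fun j _ => ?_
      rcases eq_or_ne i j with rfl | hij
      · simp [hgi]
      · exact mul_nonneg (hA i j hij) (hg j)
    have hsplit : (A *ᵥ (e s + fun _ => E)) i = (A *ᵥ e s) i + (∑ j, A i j) * E := by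
      simp only [Matrix.mulVec, dotProduct, Pi.add_apply, mul_add, Finset.sum_add_distrib,
        Finset.sum_mul]
    have hKE : ε * (Real.exp (K * s) * K) = K * E := by ring
    linarith [hineq s hs i, mul_lt_mul_of_pos_right (hrow i) hE]
  intro t ht i
  refine le_of_forall_pos_le_add fun δ hδ => ?_
  have := hperturbed (δ / Real.exp (K * t)) (by positivity) t ht i
  rwa [Pi.add_apply, div_mul_cancel₀ _ (Real.exp_pos _).ne'] at this

theorem hasDerivAt_comp_lieDeriv {E : Type*} [NormedAddCommGroup E] [NormedSpace ℝ E]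
    {Z : E → E} {g : E → ℝ} {γ : ℝ → E} {t : ℝ} (hg : DifferentiableAt ℝ g (γ t))
    (hγ : HasDerivAt γ (Z (γ t)) t) : HasDerivAt (fun s => g (γ s)) (lieDeriv Z g (γ t)) t :=
  hg.hasFDerivAt.comp_hasDerivAt t hγ

theorem contDiff_lieDerivIter {E : Type*} [NormedAddCommGroup E] [NormedSpace ℝ E]
    {Z : E → E} {Γ : E → ℝ} {p : ℕ} (hZ : ContDiff ℝ ((p - 1 : ℕ) : ℕ∞) Z)
    (hΓ : ContDiff ℝ ((p : ℕ) : ℕ∞) Γ) :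
    ∀ k ≤ p, ContDiff ℝ ((p - k : ℕ) : ℕ∞) (lieDerivIter Z Γ k)
  | 0, _ => by simpa [lieDerivIter] using hΓ
  | k + 1, hk =>
    have hderiv : ContDiff ℝ ((p - (k + 1) : ℕ) : ℕ∞) (fderiv ℝ (lieDerivIter Z Γ k)) :=
      (contDiff_lieDerivIter hZ hΓ k (by omega)).fderiv_right (by exact_mod_cast (by omega))
    hderiv.clm_apply (hZ.of_le (by exact_mod_cast (by omega)))

def companionMatrix {p : ℕ} (χ : Fin p → ℝ) : Matrix (Fin p) (Fin p) ℝ :=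
  Matrix.of fun i j => if h : (i : ℕ) + 1 < p then (if j = ⟨i + 1, h⟩ then 1 else 0) else χ j

theorem companionMatrix_mulVec {p : ℕ} (χ v : Fin p → ℝ) (i : Fin p) :
    (companionMatrix χ *ᵥ v) i = if h : (i : ℕ) + 1 < p then v ⟨i + 1, h⟩ else ∑ j, χ j * v j := by
  simp only [companionMatrix, mulVec, dotProduct, of_apply]
  split_ifs <;> simp

theorem companionMatrix_nonneg_of_ne {p : ℕ} {χ : Fin p → ℝ}
    (hχ : ∀ i : Fin p, (i : ℕ) + 1 < p → 0 ≤ χ i) (i j : Fin p) (hij : i ≠ j) :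
    0 ≤ companionMatrix χ i j := by
  simp only [companionMatrix, of_apply]
  split_ifs with h
  · exact zero_le_one
  · exact le_rfl
  · exact hχ j (by have := Fin.val_ne_of_ne hij; omega)

theorem companionMatrix_mulVec_lieDerivIter_le {E : Type*} [NormedAddCommGroup E]
    [NormedSpace ℝ E] {Z : E → E} {Γ : E → ℝ} {p : ℕ} {χ : Fin p → ℝ} {z : E}
    (hz : lieDerivIter Z Γ p z ≥ ∑ i : Fin p, χ i * lieDerivIter Z Γ i z) (i : Fin p) :
    (companionMatrix χ *ᵥ fun j => lieDerivIter Z Γ j z) i ≤ lieDerivIter Z Γ (i + 1) z := by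
  rw [companionMatrix_mulVec]
  split_ifs with h
  · exact le_rfl
  · rwa [show (i : ℕ) + 1 = p by omega]

theorem comparison_lemma_triggering_upper_general {d p : ℕ} (hp : 0 < p)
    (M : Set (Fin d → ℝ)) (Z : (Fin d → ℝ) → (Fin d → ℝ)) (Γ : (Fin d → ℝ) → ℝ)
    (hZ : ContDiff ℝ ((p - 1 : ℕ) : ℕ∞) Z) (hΓ : ContDiff ℝ ((p : ℕ) : ℕ∞) Γ)
    (χ : Fin p → ℝ) (hχ : ∀ i : Fin p, (i : ℕ) + 1 < p → 0 ≤ χ i)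
    (hineq : ∀ z ∈ M, lieDerivIter Z Γ p z ≥ ∑ i : Fin p, χ i * lieDerivIter Z Γ i z)
    (z₀ : Fin d → ℝ) (T : ℝ)
    (𝓏 : ℝ → (Fin d → ℝ)) (h𝓏0 : 𝓏 0 = z₀)
    (h𝓏deriv : ∀ t ∈ Set.Icc (0 : ℝ) T, HasDerivAt 𝓏 (Z (𝓏 t)) t)
    (h𝓏M : ∀ t ∈ Set.Icc (0 : ℝ) T, 𝓏 t ∈ M)
    (y : ℝ → Fin p → ℝ)
    (hy0 : ∀ i : Fin p, y 0 i = lieDerivIter Z Γ i z₀)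
    (hyderiv : ∀ t ∈ Set.Icc (0 : ℝ) T, ∀ i : Fin p,
      HasDerivAt (fun s => y s i)
        (if h : (i : ℕ) + 1 < p then y t ⟨(i : ℕ) + 1, h⟩
         else ∑ j : Fin p, χ j * y t j) t) :
    ∀ t ∈ Set.Icc (0 : ℝ) T, Γ (𝓏 t) ≥ y t ⟨0, hp⟩ := by
  set A := companionMatrix χ
  set L : ℝ → Fin p → ℝ := fun s i => lieDerivIter Z Γ i (𝓏 s)
  have hL : ∀ s ∈ Icc 0 T, ∀ i : Fin p,
      HasDerivAt (fun s => L s i) (lieDerivIter Z Γ (i + 1) (𝓏 s)) s := fun s hs i =>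
    hasDerivAt_comp_lieDeriv (((contDiff_lieDerivIter hZ hΓ i i.isLt.le).differentiable
      (by exact_mod_cast (by omega))).differentiableAt) (h𝓏deriv s hs)
  have hy : ∀ s ∈ Icc 0 T, ∀ i, HasDerivAt (fun s => y s i) ((A *ᵥ y s) i) s := by
    simpa only [A, companionMatrix_mulVec] using hyderiv
  have hgap : ∀ s ∈ Icc 0 T, 0 ≤ L s - y s := by
    refine nonneg_of_mulVec_le_deriv (companionMatrix_nonneg_of_ne hχ)
      (e' := fun s i => lieDerivIter Z Γ (i + 1) (𝓏 s) - (A *ᵥ y s) i)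
      (continuousOn_pi.mpr fun i => continuousOn_of_forall_continuousAt fun s hs =>
        ((hL s hs i).sub (hy s hs i)).continuousAt)
      (fun s hs i => ((hL s (Ico_subset_Icc_self hs) i).sub
        (hy s (Ico_subset_Icc_self hs) i)).hasDerivWithinAt)
      (fun i => by simp [L, h𝓏0, hy0]) ?_
    intro s hs i
    simp only [mulVec_sub, Pi.sub_apply]
    linarith [companionMatrix_mulVec_lieDerivIter_le
      (hineq _ (h𝓏M s (Ico_subset_Icc_self hs))) i]
  intro t ht
  simpa [L, lieDerivIter] using hgap t ht ⟨0, hp⟩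

/-- Upper-bound variant of the comparison lemma: under the reversed differential
inequality `L_Z^p Γ ≥ Σ_i χ_i L_Z^i Γ` on `M` (with `χ_i ≥ 0` for `i ≤ p - 2`), the
first component of the solution of the companion linear system lower-bounds `Γ` along
the solution of `ż = Z z`: `Γ (𝓏 t) ≥ y t 0` for `t ∈ [0, T]`. -/
theorem comparison_lemma_triggering_upper {d p : ℕ} (hp : 0 < p)
    (M : Set (Fin d → ℝ)) (Z : (Fin d → ℝ) → (Fin d → ℝ)) (Γ : (Fin d → ℝ) → ℝ)
    (hZ : ContDiff ℝ ((p - 1 : ℕ) : ℕ∞) Z) (hΓ : ContDiff ℝ ((p : ℕ) : ℕ∞) Γ)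
    (χ : Fin p → ℝ) (hχ : ∀ i : Fin p, (i : ℕ) + 1 < p → 0 ≤ χ i)
    (hineq : ∀ z ∈ M, lieDerivIter Z Γ p z ≥ ∑ i : Fin p, χ i * lieDerivIter Z Γ i z)
    (z₀ : Fin d → ℝ) (T : ℝ) (hT : 0 ≤ T)
    (𝓏 : ℝ → (Fin d → ℝ)) (h𝓏0 : 𝓏 0 = z₀)
    (h𝓏deriv : ∀ t ∈ Set.Icc (0 : ℝ) T, HasDerivAt 𝓏 (Z (𝓏 t)) t)
    (h𝓏M : ∀ t ∈ Set.Icc (0 : ℝ) T, 𝓏 t ∈ M)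
    (y : ℝ → Fin p → ℝ)
    (hy0 : ∀ i : Fin p, y 0 i = lieDerivIter Z Γ i z₀)
    (hyderiv : ∀ t ∈ Set.Icc (0 : ℝ) T, ∀ i : Fin p,
      HasDerivAt (fun s => y s i)
        (if h : (i : ℕ) + 1 < p then y t ⟨(i : ℕ) + 1, h⟩
         else ∑ j : Fin p, χ j * y t j) t) :
    ∀ t ∈ Set.Icc (0 : ℝ) T, Γ (𝓏 t) ≥ y t ⟨0, hp⟩ :=
  comparison_lemma_triggering_upper_general hp M Z Γ hZ hΓ χ hχ hineq z₀ T 𝓏 h𝓏0 h𝓏deriv h𝓏M y hy0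
    hyderiv
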